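/- Iterated-predecessor characterization of temporal reachability winning regions on eventually static graphs: consider a temporal reachability game with target set F whose edge relation is constant from time m onward, let G_m = (V, E_m) be the static game with E_m = {(u,v) : u →_m v}, and let W_m be the set of vertices from which Player 1 wins the reachability game on G_m with target F. For S ⊆ V and t ∈ ℕ define Pre_t(S) = F ∪ {u ∈ V₁ ∖ F : ∃v, u →_t v ∧ v ∈ S} ∪ {u ∈ V₂ ∖ F : (∃v, u →_t v) ∧ ∀v (u →_t v → v ∈ S)}. Then for every k ≤ m and every vertex u, Player 1 wins the temporal reachability game from (u,k) if and only if u ∈ Pre_k(Pre_{k+1}(⋯ Pre_{m−1}(W_m) ⋯)) (the identity on W_m when k = m). -/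

import Mathlib

/-!
A temporal graph: vertex set `V`, time-indexed edge relation `E t u v` (edge from `u` to `v`
available at time `t`).  `P1 v` means vertex `v` is controlled by Player 1.  A play from
position `(u,k)` is a maximal sequence of positions `(v₀,k), (v₁,k+1), …` following available
edges, where the owner of the current vertex chooses the next one; the play halts at a
position whose owner has no available edge.

`P1WinsReach E P1 F u k` : Player 1 wins the reachability game with target set `F` from
position `(u, k)`, i.e. she has a strategy (assigning to each position `(v,t)` with `v ∈ V₁`
that has at least one available edge an available successor) such that every maximal play
from `(u,k)` consistent with it — infinite, or halting at a position with no available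
edge — visits `F`.
-/
def P1WinsReach {V : Type*} (E : ℕ → V → V → Prop) (P1 : V → Prop) (F : Set V)
    (u : V) (k : ℕ) : Prop :=
  ∃ σ : V → ℕ → V,
    (∀ (v : V) (t : ℕ), k ≤ t → P1 v → (∃ w, E t v w) → E t v (σ v t)) ∧
    (∀ ρ : ℕ → V, ρ 0 = u →
      (∀ i, E (k + i) (ρ i) (ρ (i + 1))) →
      (∀ i, P1 (ρ i) → ρ (i + 1) = σ (ρ i) (k + i)) →
      ∃ i, ρ i ∈ F) ∧
    (∀ (ρ : ℕ → V) (n : ℕ), ρ 0 = u →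
      (∀ i < n, E (k + i) (ρ i) (ρ (i + 1))) →
      (∀ i < n, P1 (ρ i) → ρ (i + 1) = σ (ρ i) (k + i)) →
      (∀ w, ¬ E (k + n) (ρ n) w) →
      ∃ i ≤ n, ρ i ∈ F)

/-!
`Pre E P1 F t S` : the one-step predecessor operator of the temporal reachability game
with target set `F`:
`Pre_t(S) = F ∪ {u ∈ V₁ \ F : ∃v, u →_t v ∧ v ∈ S}
             ∪ {u ∈ V₂ \ F : (∃v, u →_t v) ∧ ∀v (u →_t v → v ∈ S)}`.

`preIter E P1 F m W j` : the `j`-fold iteration `Pre_{m-j}(Pre_{m-j+1}(⋯ Pre_{m-1}(W)⋯))`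
(so `preIter … 0 = W` and `preIter … (m-k)` starts with `Pre_k` for `k ≤ m`).
-/
def Pre {V : Type*} (E : ℕ → V → V → Prop) (P1 : V → Prop) (F : Set V)
    (t : ℕ) (S : Set V) : Set V :=
  F ∪ {u | P1 u ∧ u ∉ F ∧ ∃ v, E t u v ∧ v ∈ S}
    ∪ {u | ¬ P1 u ∧ u ∉ F ∧ (∃ v, E t u v) ∧ ∀ v, E t u v → v ∈ S}

def preIter {V : Type*} (E : ℕ → V → V → Prop) (P1 : V → Prop) (F : Set V)
    (m : ℕ) (W : Set V) : ℕ → Set V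
  | 0 => W
  | j + 1 => Pre E P1 F (m - (j + 1)) (preIter E P1 F m W j)

namespace IterPre

open OrdinalApprox Cardinal Order Classical

variable {V : Type*} (E : ℕ → V → V → Prop) (P1 : V → Prop) (F : Set V) (m : ℕ)

lemma pre_mono (t : ℕ) : Monotone (Pre E P1 F t) := by
  intro S T hST u hu
  rcases hu with (hu | ⟨h1, h2, v, hv, hvS⟩) | ⟨h1, h2, h3, h4⟩
  · exact Or.inl (Or.inl hu)
  · exact Or.inl (Or.inr ⟨h1, h2, v, hv, hST hvS⟩)
  · exact Or.inr ⟨h1, h2, h3, fun v hv => hST (h4 v hv)⟩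

/-- The predecessor operator at time `m`, bundled as a monotone map. -/
def Phi : Set V →o Set V := ⟨Pre E P1 F m, pre_mono E P1 F m⟩

lemma F_subset_pre (t : ℕ) (S : Set V) : F ⊆ Pre E P1 F t S :=
  fun _ hz => Or.inl (Or.inl hz)

lemma lfp_fixed : Pre E P1 F m (OrderHom.lfp (Phi E P1 F m)) = OrderHom.lfp (Phi E P1 F m) :=
  OrderHom.map_lfp (Phi E P1 F m)

lemma F_subset_lfp : F ⊆ OrderHom.lfp (Phi E P1 F m) := by
  rw [← lfp_fixed E P1 F m]; exact F_subset_pre E P1 F m _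

/-- The winning region of the static game played with edge relation `E m`. -/
def Wst : Set V := {x : V | P1WinsReach (fun _ a b => E m a b) P1 F x 0}

/-- Rank of a vertex: the least ordinal `b` such that `x` belongs to the image under
the predecessor operator of the `b`-th fixed-point approximant. -/
noncomputable def rk (x : V) : Ordinal :=
  sInf {b : Ordinal | x ∈ Pre E P1 F m (lfpApprox (Phi E P1 F m) ⊥ b)}

lemma mem_approx_unfold {x : V} {a : Ordinal}
    (h : x ∈ lfpApprox (Phi E P1 F m) ⊥ a) :
    ∃ b < a, x ∈ Pre E P1 F m (lfpApprox (Phi E P1 F m) ⊥ b) := by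
  rw [lfpApprox] at h
  simp only [Set.bot_eq_empty, Set.sup_eq_union, Set.empty_union, Set.iSup_eq_iUnion,
    Set.mem_iUnion] at h
  obtain ⟨b, hb, hxs⟩ := h
  exact ⟨b, hb, hxs⟩

lemma approx_subset_lfp (b : Ordinal) :
    lfpApprox (Phi E P1 F m) ⊥ b ≤ OrderHom.lfp (Phi E P1 F m) :=
  lfpApprox_le_of_mem_fixedPoints (f := Phi E P1 F m) (x := ⊥)
    (ha := OrderHom.map_lfp (Phi E P1 F m)) (hxa := bot_le) (i := b)

lemma rk_spec (x : V) (hx : x ∈ OrderHom.lfp (Phi E P1 F m)) :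
    x ∈ Pre E P1 F m (lfpApprox (Phi E P1 F m) ⊥ (rk E P1 F m x)) := by
  have hx' : x ∈ lfpApprox (Phi E P1 F m) ⊥ (ord (succ #(Set V))) := by
    rw [lfpApprox_ord_eq_lfp]
    exact hx
  obtain ⟨b, _, hb⟩ := mem_approx_unfold E P1 F m hx'
  have hmem : sInf {b : Ordinal | x ∈ Pre E P1 F m (lfpApprox (Phi E P1 F m) ⊥ b)} ∈
      {b : Ordinal | x ∈ Pre E P1 F m (lfpApprox (Phi E P1 F m) ⊥ b)} :=
    csInf_mem ⟨b, hb⟩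
  exact hmem

lemma rk_lt (x y : V) (hy : y ∈ lfpApprox (Phi E P1 F m) ⊥ (rk E P1 F m x)) :
    y ∈ OrderHom.lfp (Phi E P1 F m) ∧ rk E P1 F m y < rk E P1 F m x := by
  obtain ⟨b, hb, hyb⟩ := mem_approx_unfold E P1 F m hy
  exact ⟨approx_subset_lfp E P1 F m _ hy, lt_of_le_of_lt (csInf_le' hyb) hb⟩

lemma no_ordinal_descent (f : ℕ → Ordinal) (h : ∀ i, f (i + 1) < f i) : False := by
  obtain ⟨a, ha, hmin⟩ := Ordinal.lt_wf.has_min (Set.range f) ⟨f 0, 0, rfl⟩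
  obtain ⟨i, rfl⟩ := ha
  exact hmin (f (i + 1)) ⟨i + 1, rfl⟩ (h i)

/-- One step of Player 2's escape play: at a Player-1 vertex follow `σ`; at a Player-2
vertex move (if possible) to a successor outside the least fixed point. -/
noncomputable def escStep {V : Type*} (E : ℕ → V → V → Prop) (P1 : V → Prop) (F : Set V)
    (m : ℕ) (σ : V → ℕ → V) (w : V) (i : ℕ) : V :=
  if P1 w then σ w i
  else if h : ∃ v, E m w v ∧ v ∉ OrderHom.lfp (Phi E P1 F m) then h.choose else w

noncomputable def escPlay {V : Type*} (E : ℕ → V → V → Prop) (P1 : V → Prop) (F : Set V)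
    (m : ℕ) (σ : V → ℕ → V) (x : V) : ℕ → V
  | 0 => x
  | i + 1 => escStep E P1 F m σ (escPlay E P1 F m σ x i) i

/-- Every vertex from which Player 1 wins the static game lies in the least fixed point of
the predecessor operator. -/
lemma winStatic_mem_lfp (x : V) (hx : P1WinsReach (fun _ a b => E m a b) P1 F x 0) :
    x ∈ OrderHom.lfp (Phi E P1 F m) := by
  classical
  by_contra hxB
  have hfix : Pre E P1 F m (OrderHom.lfp (Phi E P1 F m)) = OrderHom.lfp (Phi E P1 F m) :=
    lfp_fixed E P1 F m
  have hFB : F ⊆ OrderHom.lfp (Phi E P1 F m) := F_subset_lfp E P1 F m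
  obtain ⟨σ, hedge, hinf, hhalt⟩ := hx
  set B : Set V := OrderHom.lfp (Phi E P1 F m) with hBdef
  let ρ : ℕ → V := escPlay E P1 F m σ x
  have hρ0 : ρ 0 = x := rfl
  have hρs : ∀ i, ρ (i + 1) = escStep E P1 F m σ (ρ i) i := fun _ => rfl
  have hstep : ∀ i, ρ i ∉ B → (∃ v, E m (ρ i) v) →
      E m (ρ i) (ρ (i + 1)) ∧ ρ (i + 1) ∉ B := by
    intro i hiB hex
    by_cases hp : P1 (ρ i)
    · have hmove : E m (ρ i) (σ (ρ i) i) := hedge (ρ i) i (Nat.zero_le i) hp hex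
      have hρ1 : ρ (i + 1) = σ (ρ i) i := by
        rw [hρs i]; unfold escStep; rw [if_pos hp]
      rw [hρ1]
      refine ⟨hmove, fun hmem => hiB ?_⟩
      rw [← hfix]
      exact Or.inl (Or.inr ⟨hp, fun hF => hiB (hFB hF), σ (ρ i) i, hmove, hmem⟩)
    · by_cases h : ∃ v, E m (ρ i) v ∧ v ∉ OrderHom.lfp (Phi E P1 F m)
      · have hρ1 : ρ (i + 1) = h.choose := by
          rw [hρs i]; unfold escStep; rw [if_neg hp, dif_pos h]
        rw [hρ1]
        exact ⟨h.choose_spec.1, h.choose_spec.2⟩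
      · exfalso
        push_neg at h
        apply hiB
        rw [← hfix]
        exact Or.inr ⟨hp, fun hF => hiB (hFB hF), hex, fun v hv => h v hv⟩
  have key : ∀ i, (∀ j < i, ∃ v, E m (ρ j) v) → ρ i ∉ B := by
    intro i
    induction i with
    | zero => intro _; rw [hρ0]; exact hxB
    | succ i ih =>
      intro he
      have hiB := ih (fun j hj => he j (by omega))
      exact (hstep i hiB (he i (by omega))).2
  by_cases hall : ∀ i, ∃ v, E m (ρ i) v
  · have hnB : ∀ i, ρ i ∉ B := fun i => key i (fun j _ => hall j)
    have hedges : ∀ i, (fun (_ : ℕ) a b => E m a b) (0 + i) (ρ i) (ρ (i + 1)) :=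
      fun i => (hstep i (hnB i) (hall i)).1
    have hcons : ∀ i, P1 (ρ i) → ρ (i + 1) = σ (ρ i) (0 + i) := by
      intro i hp
      rw [Nat.zero_add, hρs i]; unfold escStep; rw [if_pos hp]
    obtain ⟨i, hiF⟩ := hinf ρ hρ0 hedges hcons
    exact hnB i (hFB hiF)
  · push_neg at hall
    have hn : ∀ v, ¬ E m (ρ (Nat.find hall)) v := Nat.find_spec hall
    have hlt : ∀ j < Nat.find hall, ∃ v, E m (ρ j) v := by
      intro j hj
      have := Nat.find_min hall hj
      push_neg at this
      exact this
    have hnB : ∀ i ≤ Nat.find hall, ρ i ∉ B := fun i hi =>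
      key i (fun j hj => hlt j (by omega))
    obtain ⟨i, hin, hiF⟩ := hhalt ρ (Nat.find hall) hρ0
      (fun i hi => (hstep i (hnB i (le_of_lt hi)) (hlt i hi)).1)
      (fun i _ hp => by
        rw [Nat.zero_add, hρs i]; unfold escStep; rw [if_pos hp])
      (fun w => hn w)
    exact hnB i hin (hFB hiF)

/-- Default move: some available edge if one exists. -/
noncomputable def dflt {V : Type*} (E : ℕ → V → V → Prop) (t : ℕ) (w : V) : V :=
  if h : ∃ v, E t w v then h.choose else w

lemma dflt_spec {V : Type*} (E : ℕ → V → V → Prop) (t : ℕ) (w : V) (h : ∃ v, E t w v) :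
    E t w (dflt E t w) := by
  unfold dflt; rw [dif_pos h]; exact h.choose_spec

/-- Player 1's global strategy: before time `m`, move into the next iterated predecessor
set; from time `m` on, move to a successor in the least fixed point of strictly smaller
rank. -/
noncomputable def bstrat {V : Type*} (E : ℕ → V → V → Prop) (P1 : V → Prop) (F : Set V)
    (m : ℕ) (w : V) (t : ℕ) : V :=
  if t < m then
    (if h : ∃ v, E t w v ∧ v ∈ preIter E P1 F m (Wst E P1 F m) (m - (t + 1)) then
      h.choose else dflt E t w)
  else
    (if h : ∃ v, E m w v ∧ v ∈ OrderHom.lfp (Phi E P1 F m) ∧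
        rk E P1 F m v < rk E P1 F m w then h.choose else dflt E t w)

/-- Invariant maintained along plays: before time `m` the current vertex lies in the
appropriate iterated predecessor set, afterwards in the least fixed point. -/
abbrev Good {V : Type*} (E : ℕ → V → V → Prop) (P1 : V → Prop) (F : Set V)
    (m : ℕ) (t : ℕ) (x : V) : Prop :=
  (t < m → x ∈ preIter E P1 F m (Wst E P1 F m) (m - t)) ∧
  (m ≤ t → x ∈ OrderHom.lfp (Phi E P1 F m))

lemma bwd (hstatic : ∀ t, m ≤ t → ∀ u v : V, E t u v ↔ E m u v)
    (k j : ℕ) (hkj : k + j = m) (u : V)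
    (hu : u ∈ preIter E P1 F m (Wst E P1 F m) j) :
    P1WinsReach E P1 F u k := by
  classical
  have hWB : Wst E P1 F m ⊆ OrderHom.lfp (Phi E P1 F m) :=
    fun x hx => winStatic_mem_lfp E P1 F m x hx
  have hk : k ≤ m := by omega
  have hGu : Good E P1 F m k u := by
    constructor
    · intro _
      have hmk : m - k = j := by omega
      rw [hmk]; exact hu
    · intro hm
      have hj : j = 0 := by omega
      rw [hj] at hu
      exact hWB hu
  have hprog : ∀ t x, Good E P1 F m t x → x ∉ F →
      (∃ v, E t x v) ∧
      (P1 x → E t x (bstrat E P1 F m x t) ∧ Good E P1 F m (t + 1) (bstrat E P1 F m x t) ∧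
        (m ≤ t → rk E P1 F m (bstrat E P1 F m x t) < rk E P1 F m x)) ∧
      (¬ P1 x → ∀ v, E t x v → Good E P1 F m (t + 1) v ∧
        (m ≤ t → rk E P1 F m v < rk E P1 F m x)) := by
    intro t x hGood hxF
    by_cases htm : t < m
    · have hx : x ∈ preIter E P1 F m (Wst E P1 F m) (m - t) := hGood.1 htm
      have hmt : m - t = (m - (t + 1)) + 1 := by omega
      rw [hmt] at hx
      have hx' : x ∈ Pre E P1 F (m - ((m - (t + 1)) + 1))
          (preIter E P1 F m (Wst E P1 F m) (m - (t + 1))) := hx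
      have htt : m - ((m - (t + 1)) + 1) = t := by omega
      rw [htt] at hx'
      have hGood' : ∀ v, v ∈ preIter E P1 F m (Wst E P1 F m) (m - (t + 1)) →
          Good E P1 F m (t + 1) v := by
        intro v hv
        constructor
        · intro _; exact hv
        · intro hm1
          have h0 : m - (t + 1) = 0 := by omega
          rw [h0] at hv
          exact hWB hv
      rcases hx' with (hx' | ⟨hp1, _, v, hv, hvS⟩) | ⟨hp2, _, ⟨v0, hv0⟩, hall⟩
      · exact absurd hx' hxF
      · have hcond : ∃ v, E t x v ∧ v ∈ preIter E P1 F m (Wst E P1 F m) (m - (t + 1)) :=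
          ⟨v, hv, hvS⟩
        have hσ : bstrat E P1 F m x t = hcond.choose := by
          unfold bstrat; rw [if_pos htm, dif_pos hcond]
        refine ⟨⟨v, hv⟩, ?_, fun hnp => absurd hp1 hnp⟩
        intro _
        rw [hσ]
        exact ⟨hcond.choose_spec.1, hGood' _ hcond.choose_spec.2,
          fun hmt' => absurd hmt' (by omega)⟩
      · refine ⟨⟨v0, hv0⟩, fun hp => absurd hp hp2, ?_⟩
        intro _ v hv
        exact ⟨hGood' _ (hall v hv), fun hmt' => absurd hmt' (by omega)⟩
    · have hmt : m ≤ t := by omega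
      have hxB : x ∈ OrderHom.lfp (Phi E P1 F m) := hGood.2 hmt
      have hx' := rk_spec E P1 F m x hxB
      have hGood' : ∀ v, v ∈ OrderHom.lfp (Phi E P1 F m) → Good E P1 F m (t + 1) v :=
        fun v hv => ⟨fun h => absurd h (by omega), fun _ => hv⟩
      rcases hx' with (hx' | ⟨hp1, _, v, hv, hvS⟩) | ⟨hp2, _, ⟨v0, hv0⟩, hall⟩
      · exact absurd hx' hxF
      · have hvB := rk_lt E P1 F m x v hvS
        have hcond : ∃ w, E m x w ∧ w ∈ OrderHom.lfp (Phi E P1 F m) ∧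
            rk E P1 F m w < rk E P1 F m x := ⟨v, hv, hvB.1, hvB.2⟩
        have hσ : bstrat E P1 F m x t = hcond.choose := by
          unfold bstrat; rw [if_neg htm, dif_pos hcond]
        obtain ⟨he, hb, hr⟩ := hcond.choose_spec
        refine ⟨⟨v, (hstatic t hmt x v).mpr hv⟩, ?_, fun hnp => absurd hp1 hnp⟩
        intro _
        rw [hσ]
        exact ⟨(hstatic t hmt x _).mpr he, hGood' _ hb, fun _ => hr⟩
      · refine ⟨⟨v0, (hstatic t hmt x v0).mpr hv0⟩, fun hp => absurd hp hp2, ?_⟩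
        intro _ v hv
        have hvm : E m x v := (hstatic t hmt x v).mp hv
        have h2 := rk_lt E P1 F m x v (hall v hvm)
        exact ⟨hGood' _ h2.1, fun _ => h2.2⟩
  refine ⟨bstrat E P1 F m, ?_, ?_, ?_⟩
  · intro v t _ _ hex
    unfold bstrat
    split_ifs with h1 h2 h3
    · exact h2.choose_spec.1
    · exact dflt_spec E t v hex
    · exact (hstatic t (by omega) v _).mpr h3.choose_spec.1
    · exact dflt_spec E t v hex
  · intro ρ h0 hedges hcons
    by_contra hnF
    push_neg at hnF
    have hg : ∀ i, Good E P1 F m (k + i) (ρ i) := by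
      intro i
      induction i with
      | zero => rw [h0]; exact hGu
      | succ i ih =>
        have hpr := hprog (k + i) (ρ i) ih (hnF i)
        by_cases hp : P1 (ρ i)
        · have hc := hcons i hp
          rw [hc]
          exact (hpr.2.1 hp).2.1
        · exact (hpr.2.2 hp (ρ (i + 1)) (hedges i)).1
    have hdesc : ∀ i : ℕ,
        rk E P1 F m (ρ ((m - k) + (i + 1))) < rk E P1 F m (ρ ((m - k) + i)) := by
      intro i
      have hmi : m ≤ k + ((m - k) + i) := by omega
      have hpr := hprog (k + ((m - k) + i)) (ρ ((m - k) + i)) (hg _) (hnF _)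
      by_cases hp : P1 (ρ ((m - k) + i))
      · have hc := hcons ((m - k) + i) hp
        have h2 := (hpr.2.1 hp).2.2 hmi
        rw [← hc] at h2
        exact h2
      · exact (hpr.2.2 hp _ (hedges ((m - k) + i))).2 hmi
    exact no_ordinal_descent (fun i => rk E P1 F m (ρ ((m - k) + i))) hdesc
  · intro ρ n h0 hedges hcons hstop
    by_contra hnF
    push_neg at hnF
    have hg : ∀ i, i ≤ n → Good E P1 F m (k + i) (ρ i) := by
      intro i
      induction i with
      | zero => intro _; rw [h0]; exact hGu
      | succ i ih =>
        intro hin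
        have hi : i ≤ n := by omega
        have hpr := hprog (k + i) (ρ i) (ih hi) (hnF i hi)
        by_cases hp : P1 (ρ i)
        · have hc := hcons i (by omega) hp
          rw [hc]
          exact (hpr.2.1 hp).2.1
        · exact (hpr.2.2 hp (ρ (i + 1)) (hedges i (by omega))).1
    obtain ⟨v, hv⟩ := (hprog (k + n) (ρ n) (hg n le_rfl) (hnF n le_rfl)).1
    exact hstop v hv

/-- Extension of a play by one initial vertex. -/
def ext {V : Type*} (u : V) (ρ' : ℕ → V) : ℕ → V
  | 0 => u
  | i + 1 => ρ' i

lemma fwd (hstatic : ∀ t, m ≤ t → ∀ u v : V, E t u v ↔ E m u v) :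
    ∀ j k u, k + j = m → P1WinsReach E P1 F u k →
      u ∈ preIter E P1 F m (Wst E P1 F m) j := by
  intro j
  induction j with
  | zero =>
    intro k u hkm hwin
    have hk : k = m := by omega
    subst hk
    obtain ⟨σ, hedge, hinf, hhalt⟩ := hwin
    show P1WinsReach (fun _ a b => E k a b) P1 F u 0
    refine ⟨fun v t => σ v (t + k), ?_, ?_, ?_⟩
    · intro v t _ hp hex
      have hex' : ∃ w, E (t + k) v w :=
        hex.imp fun w hw => (hstatic (t + k) (Nat.le_add_left k t) v w).mpr hw
      exact (hstatic (t + k) (Nat.le_add_left k t) v _).mp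
        (hedge v (t + k) (Nat.le_add_left k t) hp hex')
    · intro ρ h0 hed hcons
      apply hinf ρ h0
      · intro i
        exact (hstatic (k + i) (Nat.le_add_right k i) _ _).mpr (hed i)
      · intro i hp
        have hc := hcons i hp
        rw [hc]
        show σ (ρ i) (0 + i + k) = σ (ρ i) (k + i)
        have harg : 0 + i + k = k + i := by omega
        rw [harg]
    · intro ρ n h0 hed hcons hstop
      apply hhalt ρ n h0
      · intro i hi
        exact (hstatic (k + i) (Nat.le_add_right k i) _ _).mpr (hed i hi)
      · intro i hi hp
        have hc := hcons i hi hp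
        rw [hc]
        show σ (ρ i) (0 + i + k) = σ (ρ i) (k + i)
        have harg : 0 + i + k = k + i := by omega
        rw [harg]
      · intro w hw
        exact hstop w ((hstatic (k + n) (Nat.le_add_right k n) _ _).mp hw)
  | succ j ih =>
    intro k u hkm hwin
    have hkm1 : m - (j + 1) = k := by omega
    show u ∈ Pre E P1 F (m - (j + 1)) (preIter E P1 F m (Wst E P1 F m) j)
    rw [hkm1]
    obtain ⟨σ, hedge, hinf, hhalt⟩ := hwin
    by_cases huF : u ∈ F
    · exact Or.inl (Or.inl huF)
    have hne : ∃ w, E k u w := by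
      by_contra hne
      push_neg at hne
      obtain ⟨i, hi, hiF⟩ := hhalt (fun _ => u) 0 rfl
        (fun i hi => absurd hi (Nat.not_lt_zero i))
        (fun i hi => absurd hi (Nat.not_lt_zero i))
        (fun w => by rw [Nat.add_zero]; exact hne w)
      exact huF hiF
    have hsucc : ∀ v, E k u v → (P1 u → v = σ u k) → P1WinsReach E P1 F v (k + 1) := by
      intro v hv hvσ
      refine ⟨σ, fun w t ht => hedge w t (by omega), ?_, ?_⟩
      · intro ρ' h0' hed' hcons'
        have hed : ∀ i, E (k + i) (ext u ρ' i) (ext u ρ' (i + 1)) := by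
          intro i
          cases i with
          | zero =>
            rw [Nat.add_zero]
            show E k u (ρ' 0)
            rw [h0']
            exact hv
          | succ i =>
            have harg : k + (i + 1) = k + 1 + i := by omega
            rw [harg]
            exact hed' i
        have hcons : ∀ i, P1 (ext u ρ' i) → ext u ρ' (i + 1) = σ (ext u ρ' i) (k + i) := by
          intro i hp
          cases i with
          | zero =>
            show ρ' 0 = σ u (k + 0)
            rw [h0', Nat.add_zero]
            exact hvσ hp
          | succ i =>
            have harg : k + (i + 1) = k + 1 + i := by omega
            rw [harg]
            exact hcons' i hp
        obtain ⟨i, hiF⟩ := hinf (ext u ρ') rfl hed hcons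
        cases i with
        | zero => exact absurd hiF huF
        | succ i => exact ⟨i, hiF⟩
      · intro ρ' n h0' hed' hcons' hstop'
        have hed : ∀ i < n + 1, E (k + i) (ext u ρ' i) (ext u ρ' (i + 1)) := by
          intro i hi
          cases i with
          | zero =>
            rw [Nat.add_zero]
            show E k u (ρ' 0)
            rw [h0']
            exact hv
          | succ i =>
            have harg : k + (i + 1) = k + 1 + i := by omega
            rw [harg]
            exact hed' i (by omega)
        have hcons : ∀ i < n + 1, P1 (ext u ρ' i) →
            ext u ρ' (i + 1) = σ (ext u ρ' i) (k + i) := by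
          intro i hi hp
          cases i with
          | zero =>
            show ρ' 0 = σ u (k + 0)
            rw [h0', Nat.add_zero]
            exact hvσ hp
          | succ i =>
            have harg : k + (i + 1) = k + 1 + i := by omega
            rw [harg]
            exact hcons' i (by omega) hp
        have hstop : ∀ w, ¬ E (k + (n + 1)) (ext u ρ' (n + 1)) w := by
          intro w
          have harg : k + (n + 1) = k + 1 + n := by omega
          rw [harg]
          exact hstop' w
        obtain ⟨i, hin, hiF⟩ := hhalt (ext u ρ') (n + 1) rfl hed hcons hstop
        cases i with
        | zero => exact absurd hiF huF
        | succ i => exact ⟨i, by omega, hiF⟩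
    by_cases hp : P1 u
    · have hmove : E k u (σ u k) := hedge u k le_rfl hp hne
      have hwv := hsucc (σ u k) hmove (fun _ => rfl)
      exact Or.inl (Or.inr ⟨hp, huF, σ u k, hmove, ih (k + 1) (σ u k) (by omega) hwv⟩)
    · exact Or.inr ⟨hp, huF, hne,
        fun v hv => ih (k + 1) v (by omega) (hsucc v hv (fun h => absurd h hp))⟩

end IterPre

/-- Iterated-predecessor characterization of temporal reachability winning regions on
eventually static graphs: suppose the edge relation is constant from time `m` onward, let
`G_m` be the static game with edge relation `E_m a b := E m a b`, and let `W_m` be the set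
of vertices from which Player 1 wins the reachability game on `G_m` with target `F`.
Then for every `k ≤ m` and vertex `u`, Player 1 wins the temporal reachability game from
`(u,k)` iff `u ∈ Pre_k(Pre_{k+1}(⋯ Pre_{m-1}(W_m)⋯))` (the identity on `W_m` when
`k = m`). -/
theorem iterated_pre_characterization
    {V : Type*} (E : ℕ → V → V → Prop) (P1 : V → Prop) (F : Set V) (m : ℕ)
    (hstatic : ∀ t, m ≤ t → ∀ u v : V, E t u v ↔ E m u v)
    (k : ℕ) (hk : k ≤ m) (u : V) :
    P1WinsReach E P1 F u k ↔
      u ∈ preIter E P1 F m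
            {x : V | P1WinsReach (fun _ a b => E m a b) P1 F x 0} (m - k) := by
  constructor
  · intro h
    exact IterPre.fwd E P1 F m hstatic (m - k) k u (by omega) h
  · intro h
    exact IterPre.bwd E P1 F m hstatic k (m - k) (by omega) u h
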